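/- Let G be a median graph with n vertices, q Θ-classes, and dimension d. Then q ≥ d(n^{1/d} - 1). -/

import Mathlib

def interval {V : Type*} (G : SimpleGraph V) (u v : V) : Set V :=
  {x | G.dist u x + G.dist x v = G.dist u v}

def IsMedianGraph {V : Type*} (G : SimpleGraph V) : Prop :=
  G.Connected ∧ ∀ x y z : V,
    ∃! m : V, m ∈ interval G x y ∧ m ∈ interval G y z ∧ m ∈ interval G z x

def cubeGraph (k : ℕ) : SimpleGraph (Fin k → Bool) :=
  SimpleGraph.fromRel (fun x y => ∃ i, x i ≠ y i ∧ ∀ j, j ≠ i → x j = y j)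

/-- Edges `e` and `f` are opposite edges of a common 4-cycle (`Θ₀` relation). -/
def oppEdges {V : Type*} (G : SimpleGraph V) (e f : Sym2 V) : Prop :=
  ∃ a b c d : V, G.Adj a b ∧ G.Adj b c ∧ G.Adj c d ∧ G.Adj d a ∧
    a ≠ c ∧ b ≠ d ∧ e = s(a, b) ∧ f = s(d, c)

/-- The `Θ`-classes: equivalence classes of the reflexive-transitive closure of `Θ₀`. -/
def thetaClasses {V : Type*} (G : SimpleGraph V) : Set (Set (Sym2 V)) :=
  {C | ∃ e ∈ G.edgeSet,
    C = {f | f ∈ G.edgeSet ∧ Relation.ReflTransGen (oppEdges G) e f}}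

/-!
Fix a vertex `v₀`. The `Θ`-classes of the edges leaving a vertex `u` towards `v₀` pairwise
cross, and they determine `u`; so the `n` vertices give `n` distinct cliques of the crossing
graph on the `q` classes. Pairwise crossing classes span a cube (project a cube of the first
classes by gates onto the boundary of the last one and double it across), so these cliques have
at most `d` elements. Finally a graph on `q` vertices without cliques of size `d + 1` has at most
`(1 + q / d) ^ d` cliques: by Zykov symmetrization the weighted clique sum is maximised by weights
on a single clique, where AM-GM applies.
-/

section CliqueSum

open Finset

lemma mul_pow_le_add_mul_div_pow {a b : ℝ} (ha : 0 ≤ a) (hb : 0 ≤ b) (n : ℕ) :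
    a * b ^ n ≤ ((a + n * b) / (n + 1)) ^ (n + 1) := by
  rcases hb.eq_or_lt with rfl | hb
  · rcases n.eq_zero_or_pos with rfl | hn
    · simp
    · rw [zero_pow hn.ne', mul_zero]; positivity
  have hbern := one_add_mul_le_pow (a := (a - b) / ((n + 1) * b))
    (by rw [le_div_iff₀ (by positivity)]; nlinarith) (n + 1)
  have hmean : (a + n * b) / (n + 1) = b * (1 + (a - b) / ((n + 1) * b)) := by
    field_simp; ring
  calc a * b ^ n = b ^ (n + 1) * (1 + ((n + 1 : ℕ) : ℝ) * ((a - b) / ((n + 1) * b))) := by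
        push_cast; field_simp; ring
    _ ≤ b ^ (n + 1) * (1 + (a - b) / ((n + 1) * b)) ^ (n + 1) := by gcongr
    _ = _ := by rw [hmean, mul_pow]

lemma prod_one_add_le_pow {ι : Type*} (s : Finset ι) {x : ι → ℝ} (hx : ∀ i ∈ s, 0 ≤ x i)
    {r : ℕ} (hs : #s ≤ r) : ∏ i ∈ s, (1 + x i) ≤ (1 + (∑ i ∈ s, x i) / r) ^ r := by
  classical
  induction s using Finset.induction_on generalizing r with
  | empty => simp
  | insert a s has ih =>
    rw [card_insert_of_notMem has] at hs
    obtain ⟨n, rfl⟩ : ∃ n, r = n + 1 := ⟨r - 1, by omega⟩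
    have hxa := hx a (mem_insert_self a s)
    have hxs : ∀ i ∈ s, 0 ≤ x i := fun i hi => hx i (mem_insert_of_mem hi)
    have hY : (n : ℝ) * ((∑ i ∈ s, x i) / n) = ∑ i ∈ s, x i := by
      rcases n.eq_zero_or_pos with rfl | hn
      · simp [card_eq_zero.1 (by omega : #s = 0)]
      · field_simp
    rw [prod_insert has, sum_insert has]
    calc (1 + x a) * ∏ i ∈ s, (1 + x i)
        ≤ (1 + x a) * (1 + (∑ i ∈ s, x i) / n) ^ n := by
          gcongr
          exact ih hxs (by omega)
      _ ≤ ((1 + x a + n * (1 + (∑ i ∈ s, x i) / n)) / (n + 1)) ^ (n + 1) :=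
          mul_pow_le_add_mul_div_pow (by linarith) (by positivity [sum_nonneg hxs]) n
      _ = _ := by
          push_cast
          congr 1
          rw [mul_add, hY]
          field_simp
          ring

section moveWeight

variable {W : Type*} [DecidableEq W]

def moveWeight (x : W → ℝ) (u w : W) : W → ℝ :=
  x + Pi.single u (x w) - Pi.single w (x w)

variable {x : W → ℝ} {u w v : W}

lemma moveWeight_apply_of_ne (hu : v ≠ u) (hw : v ≠ w) : moveWeight x u w v = x v := by
  simp [moveWeight, hu, hw]

lemma moveWeight_apply_left (h : u ≠ w) : moveWeight x u w u = x u + x w := by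
  simp [moveWeight, h]

lemma moveWeight_apply_right (h : u ≠ w) : moveWeight x u w w = 0 := by
  simp [moveWeight, h.symm]

lemma moveWeight_nonneg (hx : 0 ≤ x) : 0 ≤ moveWeight x u w := by
  intro v
  by_cases h : u = w
  · subst h; simpa [moveWeight] using hx v
  by_cases hvu : v = u
  · subst hvu; rw [moveWeight_apply_left h]; exact add_nonneg (hx v) (hx w)
  by_cases hvw : v = w
  · rw [hvw, moveWeight_apply_right h]; rfl
  · rw [moveWeight_apply_of_ne hvu hvw]; exact hx v

lemma add_mul_prod_eq_of_notMem (h : u ≠ w) {t : Finset W} (hw : w ∉ t) :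
    (x u + x w) * ∏ v ∈ t, x v =
      x u * ∏ v ∈ t, moveWeight x u w v + x w * ∏ v ∈ t, moveWeight x w u v := by
  have hrest : ∀ v ∈ t.erase u, moveWeight x u w v = x v ∧ moveWeight x w u v = x v := by
    intro v hv
    have hvw : v ≠ w := ne_of_mem_of_not_mem (mem_of_mem_erase hv) hw
    exact ⟨moveWeight_apply_of_ne (ne_of_mem_erase hv) hvw,
      moveWeight_apply_of_ne hvw (ne_of_mem_erase hv)⟩
  by_cases hu : u ∈ t
  · rw [← mul_prod_erase t _ hu, ← mul_prod_erase t _ hu, ← mul_prod_erase t _ hu,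
      prod_congr rfl fun v hv => (hrest v hv).1, prod_congr rfl fun v hv => (hrest v hv).2,
      moveWeight_apply_left h, moveWeight_apply_right h.symm]
    ring
  · rw [erase_eq_of_notMem hu] at hrest
    rw [prod_congr rfl fun v hv => (hrest v hv).1, prod_congr rfl fun v hv => (hrest v hv).2]
    ring

variable [Fintype W]

lemma sum_moveWeight : ∑ v, moveWeight x u w v = ∑ v, x v := by
  simp [moveWeight, sum_add_distrib, sum_sub_distrib]

lemma card_support_moveWeight_lt (h : u ≠ w) (hu : x u ≠ 0) (hw : x w ≠ 0) :
    #(univ.filter fun v => moveWeight x u w v ≠ 0) < #(univ.filter fun v => x v ≠ 0) := by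
  apply card_lt_card
  refine ssubset_of_subset_of_ne (fun v hv => ?_) fun heq => ?_
  · simp only [mem_filter, mem_univ, true_and] at hv ⊢
    by_cases hvu : v = u
    · exact hvu ▸ hu
    by_cases hvw : v = w
    · rw [hvw, moveWeight_apply_right h] at hv; exact absurd rfl hv
    · rwa [moveWeight_apply_of_ne hvu hvw] at hv
  · have : w ∈ univ.filter fun v => moveWeight x u w v ≠ 0 := heq ▸ by simpa using hw
    simp [moveWeight_apply_right h] at this

end moveWeight

namespace SimpleGraph

variable {W : Type*} [Fintype W] {H : SimpleGraph W}

variable (H) in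
open Classical in
/-- The multivariate clique polynomial of `H`, evaluated at `x`. -/
noncomputable def cliqueSum (x : W → ℝ) : ℝ :=
  ∑ t ∈ univ.filter (fun t : Finset W => H.IsClique (t : Set W)), ∏ v ∈ t, x v

variable {x : W → ℝ} {u w : W} {r : ℕ}

lemma add_mul_cliqueSum_eq [DecidableEq W] (h : u ≠ w) (hadj : ¬ H.Adj u w) :
    (x u + x w) * H.cliqueSum x =
      x u * H.cliqueSum (moveWeight x u w) + x w * H.cliqueSum (moveWeight x w u) := by
  simp only [cliqueSum, mul_sum, ← sum_add_distrib]
  refine sum_congr rfl fun t ht => ?_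
  have hclique : H.IsClique (t : Set W) := by simpa using ht
  by_cases hw : w ∈ t
  · have hu : u ∉ t := fun hu => hadj (hclique hu hw h)
    rw [add_comm (x u), add_mul_prod_eq_of_notMem h.symm hu]
    ring
  · exact add_mul_prod_eq_of_notMem h hw

lemma cliqueSum_eq_prod_of_isClique (hx : H.IsClique (Function.support x)) :
    H.cliqueSum x = ∏ v ∈ univ.filter (fun v => x v ≠ 0), (1 + x v) := by
  classical
  rw [prod_one_add, cliqueSum]
  refine (sum_subset (fun t ht => ?_) fun t _ ht => ?_).symm
  · refine mem_filter.2 ⟨mem_univ t, hx.subset fun v hv => ?_⟩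
    simpa using mem_powerset.1 ht hv
  · obtain ⟨v, hvt, hv⟩ := not_subset.1 (mt mem_powerset.2 ht)
    exact prod_eq_zero hvt (by simpa using hv)

theorem cliqueSum_le (hr : ∀ t : Finset W, H.IsClique (t : Set W) → #t ≤ r) {x : W → ℝ}
    (hx : 0 ≤ x) : H.cliqueSum x ≤ (1 + (∑ v, x v) / r) ^ r := by
  classical
  induction hm : #(univ.filter fun v => x v ≠ 0) using Nat.strong_induction_on generalizing x
    with
  | _ m ih =>
  by_cases hclique : H.IsClique (Function.support x)
  · rw [cliqueSum_eq_prod_of_isClique hclique, ← sum_filter_ne_zero]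
    refine prod_one_add_le_pow _ (fun v _ => hx v) (hr _ (hclique.subset fun v hv => ?_))
    simpa using hv
  obtain ⟨u, hu, w, hw, h, hadj⟩ : ∃ u, x u ≠ 0 ∧ ∃ w, x w ≠ 0 ∧ u ≠ w ∧ ¬ H.Adj u w := by
    simpa [IsClique, Set.Pairwise] using hclique
  have hmove : ∀ {u w}, u ≠ w → x u ≠ 0 → x w ≠ 0 →
      H.cliqueSum (moveWeight x u w) ≤ (1 + (∑ v, x v) / r) ^ r := fun h hu hw =>
    sum_moveWeight (x := x) ▸ ih _ (hm ▸ card_support_moveWeight_lt h hu hw)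
      (moveWeight_nonneg hx) rfl
  have hpos : 0 < x u + x w := add_pos ((hx u).lt_of_ne' hu) ((hx w).lt_of_ne' hw)
  refine le_of_mul_le_mul_left ?_ hpos
  rw [add_mul_cliqueSum_eq h hadj, add_mul]
  gcongr
  · exact hx u
  · exact hmove h hu hw
  · exact hx w
  · exact hmove h.symm hw hu

theorem ncard_setOf_isClique_le (hr : ∀ t : Finset W, H.IsClique (t : Set W) → #t ≤ r) :
    ({t : Finset W | H.IsClique (t : Set W)}.ncard : ℝ) ≤ (1 + Fintype.card W / r) ^ r := by
  classical
  calc ({t : Finset W | H.IsClique (t : Set W)}.ncard : ℝ) = H.cliqueSum 1 := by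
        simp only [cliqueSum, Pi.one_apply, prod_const_one, sum_const, nsmul_eq_mul, mul_one]
        rw [← Set.ncard_coe_finset]
        simp
    _ ≤ _ := by simpa using cliqueSum_le hr zero_le_one

end SimpleGraph

end CliqueSum

/-! ### Metric lemmas for median graphs -/

namespace SimpleGraph

variable {V : Type*} {G : SimpleGraph V} {a b c u v w x : V}

lemma mem_interval : x ∈ interval G u v ↔ G.dist u x + G.dist x v = G.dist u v := Iff.rfl

lemma mem_interval_comm : x ∈ interval G u v ↔ x ∈ interval G v u := by
  grind [mem_interval, dist_comm]

namespace Connected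

lemma exists_adj_dist_add_one (hG : G.Connected) (h : u ≠ v) :
    ∃ w, G.Adj u w ∧ G.dist w v + 1 = G.dist u v := by
  obtain ⟨p, hp⟩ := hG.exists_walk_length_eq_dist u v
  cases p with
  | nil => exact absurd rfl h
  | @cons _ w _ hadj p =>
    have := dist_le p
    have := hG.dist_triangle (u := u) (v := w) (w := v)
    rw [dist_eq_one_iff_adj.2 hadj] at this
    simp only [Walk.length_cons] at hp
    exact ⟨w, hadj, by omega⟩

lemma dist_eq_two (hG : G.Connected) (hab : G.Adj a b) (hbc : G.Adj b c) (hac : a ≠ c)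
    (hnadj : ¬ G.Adj a c) : G.dist a c = 2 := by
  have := hG.dist_triangle (u := a) (v := b) (w := c)
  have := hG.one_lt_dist_of_ne_of_not_adj hac hnadj
  rw [dist_eq_one_iff_adj.2 hab, dist_eq_one_iff_adj.2 hbc] at *
  omega

end Connected

end SimpleGraph

open SimpleGraph

namespace IsMedianGraph

variable {V : Type*} {G : SimpleGraph V} {a b c d u v x y : V}

lemma connected (hG : IsMedianGraph G) : G.Connected := hG.1

lemma dist_ne_of_adj (hG : IsMedianGraph G) (hab : G.Adj a b) (x : V) :
    G.dist x a ≠ G.dist x b := by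
  intro heq
  obtain ⟨m, ⟨hxa, hab', hbx⟩, -⟩ := hG.2 x a b
  simp only [mem_interval, dist_eq_one_iff_adj.2 hab] at hxa hab' hbx
  have h1 := dist_eq_one_iff_adj.2 hab.symm
  rcases Nat.eq_zero_or_pos (G.dist a m) with h | h
  · obtain rfl := hG.connected.dist_eq_zero_iff.1 h
    grind [SimpleGraph.dist_comm]
  · obtain rfl := hG.connected.dist_eq_zero_iff.1 (by omega : G.dist m b = 0)
    grind [SimpleGraph.dist_comm]

lemma dist_adj_cases (hG : IsMedianGraph G) (hab : G.Adj a b) (x : V) :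
    G.dist x a + 1 = G.dist x b ∨ G.dist x b + 1 = G.dist x a := by
  have := hab.diff_dist_adj (u := x)
  have := hG.dist_ne_of_adj hab x
  omega

lemma dist_lt_of_square (hG : IsMedianGraph G) (hab : G.Adj a b) (hbc : G.Adj b c)
    (hcd : G.Adj c d) (hda : G.Adj d a) (hac : a ≠ c) (hbd : b ≠ d)
    (h : G.dist x a < G.dist x b) : G.dist x d < G.dist x c := by
  by_contra hcon
  have := hG.dist_adj_cases hab x
  have := hG.dist_adj_cases hbc x
  have := hG.dist_adj_cases hcd x
  have := hG.dist_adj_cases hda x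
  have hbd2 : G.dist b d = 2 :=
    hG.connected.dist_eq_two hbc hcd hbd fun h => hG.dist_ne_of_adj h x (by omega)
  -- both `a` and `c` are medians of `x`, `b`, `d`
  have hmedian : ∀ m, G.Adj b m → G.Adj m d → G.dist x m + 1 = G.dist x b →
      m ∈ interval G x b ∧ m ∈ interval G b d ∧ m ∈ interval G d x := by
    intro m hbm hmd hm
    have := dist_eq_one_iff_adj.2 hbm
    have := dist_eq_one_iff_adj.2 hmd
    grind [mem_interval, SimpleGraph.dist_comm]
  exact hac ((hG.2 x b d).unique (hmedian a hab.symm hda.symm (by omega))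
    (hmedian c hbc hcd (by omega)))

lemma dist_lt_iff_of_square (hG : IsMedianGraph G) (hab : G.Adj a b) (hbc : G.Adj b c)
    (hcd : G.Adj c d) (hda : G.Adj d a) (hac : a ≠ c) (hbd : b ≠ d) (x : V) :
    G.dist x a < G.dist x b ↔ G.dist x d < G.dist x c :=
  ⟨hG.dist_lt_of_square hab hbc hcd hda hac hbd,
    hG.dist_lt_of_square hcd.symm hbc.symm hab.symm hda.symm hbd.symm hac.symm⟩

/-- The quadrangle condition. -/
lemma exists_adj_adj_dist_add_one (hG : IsMedianGraph G) (hux : G.Adj u x) (huy : G.Adj u y)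
    (hxy : x ≠ y) (hx : G.dist v x + 1 = G.dist v u) (hy : G.dist v y + 1 = G.dist v u) :
    ∃ m, G.Adj x m ∧ G.Adj y m ∧ G.dist v m + 1 = G.dist v x := by
  have hxy2 : G.dist x y = 2 :=
    hG.connected.dist_eq_two hux.symm huy hxy fun h => hG.dist_ne_of_adj h v (by omega)
  obtain ⟨m, ⟨hxm, hym, hvm⟩, -⟩ := hG.2 x y v
  rw [mem_interval] at hxm hym hvm
  have hmx : m ≠ x := by rintro rfl; grind [SimpleGraph.dist_comm]
  have hmy : m ≠ y := by rintro rfl; grind [SimpleGraph.dist_comm]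
  have := hG.connected.pos_dist_of_ne hmx
  have := hG.connected.pos_dist_of_ne hmy
  refine ⟨m, dist_eq_one_iff_adj.1 ?_, dist_eq_one_iff_adj.1 ?_, ?_⟩ <;>
    grind [SimpleGraph.dist_comm]

/-- Walk `u` towards `a`, pushing the edge `ux` along the squares given by the quadrangle
condition. -/
theorem reflTransGen_oppEdges_of_dist_lt (hG : IsMedianGraph G) (hab : G.Adj a b)
    (hux : G.Adj u x) (hu : G.dist u a < G.dist u b) (hx : G.dist x b < G.dist x a) :
    Relation.ReflTransGen (oppEdges G) s(a, b) s(u, x) := by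
  induction hn : G.dist u a using Nat.strong_induction_on generalizing u x with
  | _ n ih =>
  have := hG.dist_adj_cases hab u
  have := hG.dist_adj_cases hab x
  have := hG.connected.dist_triangle (u := u) (v := x) (w := b)
  have := hG.connected.dist_triangle (u := x) (v := u) (w := a)
  have := dist_eq_one_iff_adj.2 hux
  have hxb : G.dist x b = n := by grind [SimpleGraph.dist_comm]
  rcases Nat.eq_zero_or_pos n with rfl | hpos
  · obtain rfl := hG.connected.dist_eq_zero_iff.1 hn
    obtain rfl := hG.connected.dist_eq_zero_iff.1 hxb
    rfl
  obtain ⟨p, hup, hpa⟩ := hG.connected.exists_adj_dist_add_one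
    (fun h : u = a => by simp [h] at hn; omega)
  have := hG.dist_adj_cases hup b
  have := hG.connected.dist_triangle (u := p) (v := a) (w := b)
  have := dist_eq_one_iff_adj.2 hab
  have := dist_eq_one_iff_adj.2 hup
  have hpb : G.dist b p + 1 = G.dist b u := by grind [SimpleGraph.dist_comm]
  obtain ⟨m, hxm, hpm, hbm⟩ := hG.exists_adj_adj_dist_add_one (v := b) hux hup
    (by rintro rfl; omega) (by grind [SimpleGraph.dist_comm]) hpb
  have := hG.dist_adj_cases hab m
  have := hG.connected.dist_triangle (u := x) (v := m) (w := a)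
  have := dist_eq_one_iff_adj.2 hxm
  refine (ih (G.dist p a) (by omega) hpm (by grind [SimpleGraph.dist_comm])
    (by grind [SimpleGraph.dist_comm]) rfl).tail
    ⟨p, m, x, u, hpm, hxm.symm, hux.symm, hup, ?_, ?_, rfl, rfl⟩
  · rintro rfl; omega
  · rintro rfl; grind [SimpleGraph.dist_comm]

end IsMedianGraph

/-! ### `Θ`-classes and their sides -/

namespace SimpleGraph

variable {V : Type*} {G : SimpleGraph V} {C : Set (Sym2 V)} {e f : Sym2 V} {a b : V}

lemma oppEdges_symm (h : oppEdges G e f) : oppEdges G f e := by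
  obtain ⟨a, b, c, d, hab, hbc, hcd, hda, hac, hbd, rfl, rfl⟩ := h
  exact ⟨d, c, b, a, hcd.symm, hbc.symm, hab.symm, hda.symm, hbd.symm, hac.symm, rfl, rfl⟩

lemma reflTransGen_oppEdges_symm (h : Relation.ReflTransGen (oppEdges G) e f) :
    Relation.ReflTransGen (oppEdges G) f e := by
  induction h with
  | refl => rfl
  | tail _ hstep ih => exact .head (oppEdges_symm hstep) ih

variable (G) in
def thetaClass (e : Sym2 V) : Set (Sym2 V) :=
  {f | f ∈ G.edgeSet ∧ Relation.ReflTransGen (oppEdges G) e f}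

lemma thetaClass_mem_thetaClasses (he : e ∈ G.edgeSet) : G.thetaClass e ∈ thetaClasses G :=
  ⟨e, he, rfl⟩

lemma mem_thetaClass_self (he : e ∈ G.edgeSet) : e ∈ G.thetaClass e := ⟨he, .refl⟩

lemma eq_thetaClass_of_mem (hC : C ∈ thetaClasses G) (he : e ∈ C) : C = G.thetaClass e := by
  obtain ⟨e₀, -, rfl⟩ := hC
  ext f
  exact ⟨fun hf => ⟨hf.1, (reflTransGen_oppEdges_symm he.2).trans hf.2⟩,
    fun hf => ⟨hf.1, he.2.trans hf.2⟩⟩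

lemma thetaClass_eq_of_oppEdges (he : e ∈ G.edgeSet) (h : oppEdges G e f) :
    G.thetaClass f = G.thetaClass e := by
  have hf : f ∈ G.edgeSet := by obtain ⟨a, b, c, d, -, -, hcd, -, -, -, -, rfl⟩ := h; exact hcd.symm
  exact (eq_thetaClass_of_mem (thetaClass_mem_thetaClasses he) ⟨hf, .single h⟩).symm

lemma adj_of_mem_thetaClasses (hC : C ∈ thetaClasses G) (h : s(a, b) ∈ C) : G.Adj a b := by
  obtain ⟨e₀, -, rfl⟩ := hC
  exact h.1

lemma exists_mem_of_mem_thetaClasses (hC : C ∈ thetaClasses G) : ∃ a b, s(a, b) ∈ C := by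
  obtain ⟨e, he, rfl⟩ := hC
  induction e using Sym2.ind with
  | _ a b => exact ⟨a, b, mem_thetaClass_self he⟩

variable (G) in
def EdgeSameSide (e : Sym2 V) (u v : V) : Prop :=
  ∀ a b, e = s(a, b) → (G.dist u a < G.dist u b ↔ G.dist v a < G.dist v b)

variable (G) in
def SameSide (C : Set (Sym2 V)) (u v : V) : Prop := ∀ e ∈ C, G.EdgeSameSide e u v

variable (G) in
def sepClasses (u v : V) : Set (Set (Sym2 V)) := {C ∈ thetaClasses G | ¬ G.SameSide C u v}

end SimpleGraph

namespace IsMedianGraph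

variable {V : Type*} {G : SimpleGraph V} {C : Set (Sym2 V)} {e f : Sym2 V}
  {a b u u' v v' x : V}

lemma edgeSameSide_iff (hG : IsMedianGraph G) (hab : G.Adj a b) :
    G.EdgeSameSide s(a, b) u v ↔ (G.dist u a < G.dist u b ↔ G.dist v a < G.dist v b) := by
  refine ⟨fun h => h a b rfl, fun h a' b' he => ?_⟩
  rcases Sym2.eq_iff.1 he with ⟨rfl, rfl⟩ | ⟨rfl, rfl⟩
  · exact h
  · have := hG.dist_adj_cases hab u
    have := hG.dist_adj_cases hab v
    omega

lemma edgeSameSide_iff_of_reflTransGen (hG : IsMedianGraph G)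
    (h : Relation.ReflTransGen (oppEdges G) e f) :
    G.EdgeSameSide e u v ↔ G.EdgeSameSide f u v := by
  induction h with
  | refl => rfl
  | tail _ hstep ih =>
    obtain ⟨a, b, c, d, hab, hbc, hcd, hda, hac, hbd, rfl, rfl⟩ := hstep
    rw [ih, hG.edgeSameSide_iff hab, hG.edgeSameSide_iff hcd.symm,
      hG.dist_lt_iff_of_square hab hbc hcd hda hac hbd u,
      hG.dist_lt_iff_of_square hab hbc hcd hda hac hbd v]

lemma sameSide_iff (hG : IsMedianGraph G) (hC : C ∈ thetaClasses G) (hab : s(a, b) ∈ C) :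
    G.SameSide C u v ↔ (G.dist u a < G.dist u b ↔ G.dist v a < G.dist v b) := by
  rw [← hG.edgeSameSide_iff (adj_of_mem_thetaClasses hC hab)]
  refine ⟨fun h => h _ hab, fun h f hf => ?_⟩
  rw [eq_thetaClass_of_mem hC hab] at hf
  exact (hG.edgeSameSide_iff_of_reflTransGen hf.2).1 h

lemma sameSide_refl (hG : IsMedianGraph G) (hC : C ∈ thetaClasses G) (u : V) :
    G.SameSide C u u := by
  obtain ⟨a, b, hab⟩ := exists_mem_of_mem_thetaClasses hC
  rw [hG.sameSide_iff hC hab]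

lemma sameSide_comm (hG : IsMedianGraph G) (hC : C ∈ thetaClasses G) :
    G.SameSide C u v ↔ G.SameSide C v u := by
  obtain ⟨a, b, hab⟩ := exists_mem_of_mem_thetaClasses hC
  rw [hG.sameSide_iff hC hab, hG.sameSide_iff hC hab]
  exact Iff.comm

/-- Every `Θ`-class has exactly two sides. -/
lemma sameSide_iff_iff (hG : IsMedianGraph G) (hC : C ∈ thetaClasses G) (u v w : V) :
    G.SameSide C u w ↔ (G.SameSide C u v ↔ G.SameSide C v w) := by
  obtain ⟨a, b, hab⟩ := exists_mem_of_mem_thetaClasses hC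
  simp only [hG.sameSide_iff hC hab]
  tauto

lemma sameSide_congr (hG : IsMedianGraph G) (hC : C ∈ thetaClasses G)
    (hu : G.SameSide C u u') (hv : G.SameSide C v v') :
    G.SameSide C u v ↔ G.SameSide C u' v' := by
  rw [hG.sameSide_iff_iff hC u u' v, hG.sameSide_iff_iff hC u' v v']
  simp [hu, hv]

lemma not_sameSide_of_mem (hG : IsMedianGraph G) (hC : C ∈ thetaClasses G)
    (hab : s(a, b) ∈ C) : ¬ G.SameSide C a b := by
  have hab' := adj_of_mem_thetaClasses hC hab
  rw [hG.sameSide_iff hC hab, dist_self, dist_self, dist_eq_one_iff_adj.2 hab',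
    dist_eq_one_iff_adj.2 hab'.symm]
  simp

lemma sameSide_thetaClass_iff (hG : IsMedianGraph G) (hab : G.Adj a b) :
    G.SameSide (G.thetaClass s(a, b)) u v ↔
      (G.dist u a < G.dist u b ↔ G.dist v a < G.dist v b) :=
  hG.sameSide_iff (thetaClass_mem_thetaClasses hab) (mem_thetaClass_self hab)

lemma sameSide_of_adj (hG : IsMedianGraph G) (hC : C ∈ thetaClasses G) (hux : G.Adj u x)
    (hne : C ≠ G.thetaClass s(u, x)) : G.SameSide C u x := by
  obtain ⟨a, b, hab⟩ := exists_mem_of_mem_thetaClasses hC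
  have hadj := adj_of_mem_thetaClasses hC hab
  rw [hG.sameSide_iff hC hab]
  by_contra h
  have := hG.dist_adj_cases hadj u
  have := hG.dist_adj_cases hadj x
  apply hne
  rcases lt_or_gt_of_ne (fun h' : G.dist u a = G.dist u b => by omega) with hu | hu
  · have hrel := hG.reflTransGen_oppEdges_of_dist_lt hadj hux hu (by omega)
    rw [eq_thetaClass_of_mem hC hab, eq_thetaClass_of_mem (thetaClass_mem_thetaClasses hadj)
      ⟨hux, hrel⟩]
  · have hrel := hG.reflTransGen_oppEdges_of_dist_lt hadj.symm hux hu (by omega)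
    rw [eq_thetaClass_of_mem hC hab, Sym2.eq_swap,
      eq_thetaClass_of_mem (thetaClass_mem_thetaClasses hadj.symm) ⟨hux, hrel⟩]

lemma not_sameSide_adj_iff (hG : IsMedianGraph G) (hC : C ∈ thetaClasses G) (hux : G.Adj u x) :
    ¬ G.SameSide C u x ↔ C = G.thetaClass s(u, x) :=
  ⟨not_imp_comm.1 (hG.sameSide_of_adj hC hux), fun h => h ▸ hG.not_sameSide_of_mem
    (thetaClass_mem_thetaClasses hux) (mem_thetaClass_self hux)⟩

end IsMedianGraph

/-! ### Gates and boundaries -/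

namespace SimpleGraph

variable {V : Type*} {G : SimpleGraph V} {u v w : V}

lemma interval_subset_interval (hG : G.Connected) (hw : w ∈ interval G u v) :
    interval G u w ⊆ interval G u v := fun x hx => by
  have := hG.dist_triangle (u := u) (v := x) (w := v)
  have := hG.dist_triangle (u := x) (v := w) (w := v)
  rw [mem_interval] at *
  omega

variable (G) in
def IsConvex (A : Set V) : Prop := ∀ ⦃u⦄, u ∈ A → ∀ ⦃v⦄, v ∈ A → interval G u v ⊆ A

variable (G) in
def IsGate (A : Set V) (x g : V) : Prop := g ∈ A ∧ ∀ c ∈ A, g ∈ interval G x c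

variable (G) in
def boundary (C : Set (Sym2 V)) (r : V) : Set V :=
  {v | G.SameSide C r v ∧ ∃ w, G.Adj v w ∧ ¬ G.SameSide C r w}

variable (G) in
/-- Each side of `C` meets each side of `D`. -/
def Crosses (C D : Set (Sym2 V)) : Prop := ∀ u v, ∃ w, G.SameSide C u w ∧ G.SameSide D v w

lemma Crosses.symm {C D : Set (Sym2 V)} (h : G.Crosses C D) : G.Crosses D C :=
  fun u v => (h v u).imp fun _ => And.symm

end SimpleGraph

namespace IsMedianGraph

variable {V : Type*} {G : SimpleGraph V} {A : Set V} {C D : Set (Sym2 V)}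
  {c g g' m p q r u v x y : V}

lemma exists_not_sameSide (hG : IsMedianGraph G) (hC : C ∈ thetaClasses G) (u : V) :
    ∃ v, ¬ G.SameSide C u v := by
  obtain ⟨a, b, hab⟩ := exists_mem_of_mem_thetaClasses hC
  have := hG.sameSide_iff_iff hC a u b
  have := hG.not_sameSide_of_mem hC hab
  by_cases h : G.SameSide C u a
  · exact ⟨b, by rw [hG.sameSide_comm hC] at h; tauto⟩
  · exact ⟨a, h⟩

lemma _root_.SimpleGraph.Crosses.ne (hG : IsMedianGraph G) (hC : C ∈ thetaClasses G)
    (h : G.Crosses C D) : C ≠ D := by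
  rintro rfl
  obtain ⟨a, b, hab⟩ := exists_mem_of_mem_thetaClasses hC
  obtain ⟨w, ha, hb⟩ := h a b
  exact hG.not_sameSide_of_mem hC hab
    ((hG.sameSide_iff_iff hC a w b).2 (iff_of_true ha ((hG.sameSide_comm hC).1 hb)))

lemma sepClasses_self (hG : IsMedianGraph G) (u : V) : G.sepClasses u u = ∅ :=
  Set.eq_empty_of_forall_notMem fun _ hC => hC.2 (hG.sameSide_refl hC.1 u)

theorem ncard_sepClasses [Finite V] (hG : IsMedianGraph G) (u v : V) :
    (G.sepClasses u v).ncard = G.dist u v := by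
  induction hn : G.dist u v generalizing u with
  | zero => rw [hG.connected.dist_eq_zero_iff.1 hn, hG.sepClasses_self, Set.ncard_empty]
  | succ n ih =>
    obtain ⟨w, huw, hwv⟩ := hG.connected.exists_adj_dist_add_one
      (fun h : u = v => by simp [h] at hn)
    have hC₀ : G.thetaClass s(u, w) ∈ thetaClasses G := thetaClass_mem_thetaClasses huw
    have hnot : G.thetaClass s(u, w) ∉ G.sepClasses w v := fun h => h.2 <| by
      rw [hG.sameSide_thetaClass_iff huw, dist_self, dist_comm, dist_eq_one_iff_adj.2 huw,
        dist_comm (u := v), dist_comm (u := v)]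
      omega
    have hsep : G.sepClasses u v = insert (G.thetaClass s(u, w)) (G.sepClasses w v) := by
      ext C
      simp only [sepClasses, Set.mem_insert_iff, Set.mem_ofPred_eq]
      by_cases hC : C ∈ thetaClasses G
      · rw [hG.sameSide_iff_iff hC u w v]
        by_cases hCw : C = G.thetaClass s(u, w)
        · subst hCw
          have := hG.not_sameSide_of_mem hC (mem_thetaClass_self huw)
          have : G.SameSide (G.thetaClass s(u, w)) w v := by simpa [sepClasses, hC] using hnot
          tauto
        · have := hG.sameSide_of_adj hC huw hCw
          tauto
      · exact iff_of_false (fun h => hC h.1) (by rintro (rfl | h) <;> [exact hC hC₀; exact hC h.1])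
    rw [hsep, Set.ncard_insert_of_notMem hnot, ih w (by omega)]

lemma adj_of_forall_ne_sameSide [Finite V] (hG : IsMedianGraph G) (hC : C ∈ thetaClasses G)
    (h : ¬ G.SameSide C u v) (hD : ∀ D ∈ thetaClasses G, D ≠ C → G.SameSide D u v) :
    G.Adj u v := by
  have hsep : G.sepClasses u v = {C} := by
    ext D
    simp only [sepClasses, Set.mem_ofPred_eq, Set.mem_singleton_iff]
    exact ⟨fun ⟨hD', h'⟩ => by_contra fun hne => h' (hD D hD' hne), fun h' => h' ▸ ⟨hC, h⟩⟩
  rw [← dist_eq_one_iff_adj, ← hG.ncard_sepClasses, hsep, Set.ncard_singleton]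

lemma sameSide_of_mem_interval [Finite V] (hG : IsMedianGraph G) (hC : C ∈ thetaClasses G)
    (hm : m ∈ interval G u v) (h : G.SameSide C u v) : G.SameSide C u m := by
  by_contra hum
  have hmv : ¬ G.SameSide C m v := by have := hG.sameSide_iff_iff hC u m v; tauto
  have hsub : G.sepClasses u v ⊆ (G.sepClasses u m ∪ G.sepClasses m v) \ {C} := by
    rintro D ⟨hD, huv⟩
    refine ⟨?_, fun hDC => huv (Set.mem_singleton_iff.1 hDC ▸ h)⟩
    by_cases hDum : G.SameSide D u m
    · exact Or.inr ⟨hD, fun hDmv => huv ((hG.sameSide_iff_iff hD u m v).2 (iff_of_true hDum hDmv))⟩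
    · exact Or.inl ⟨hD, hDum⟩
  have := Set.ncard_le_ncard hsub
  rw [Set.ncard_sdiff_singleton_of_mem
    (Set.mem_union_left _ (show C ∈ G.sepClasses u m from ⟨hC, hum⟩))] at this
  have := Set.ncard_union_le (G.sepClasses u m) (G.sepClasses m v)
  have := hG.connected.pos_dist_of_ne (fun h : u = m => hum (h ▸ hG.sameSide_refl hC u))
  simp only [hG.ncard_sepClasses, mem_interval] at *
  omega

lemma sameSide_of_mem_interval' [Finite V] (hG : IsMedianGraph G) (hC : C ∈ thetaClasses G)
    (hm : m ∈ interval G u v) (h : G.SameSide C u v) : G.SameSide C m v := by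
  rw [hG.sameSide_comm hC] at h ⊢
  exact hG.sameSide_of_mem_interval hC (mem_interval_comm.1 hm) h

lemma _root_.SimpleGraph.IsConvex.exists_isGate [Finite V] (hG : IsMedianGraph G)
    (hA : G.IsConvex A) (hne : A.Nonempty) (x : V) : ∃ g, G.IsGate A x g := by
  obtain ⟨g, hg, hmin⟩ := Set.exists_min_image A (G.dist x) A.toFinite hne
  refine ⟨g, hg, fun c hc => ?_⟩
  obtain ⟨m, ⟨hxg, hgc, hcx⟩, -⟩ := hG.2 x g c
  have := hmin m (hA hg hc hgc)
  obtain rfl : m = g := hG.connected.dist_eq_zero_iff.1 (by rw [mem_interval] at hxg; omega)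
  exact mem_interval_comm.1 hcx

lemma _root_.SimpleGraph.IsGate.sameSide [Finite V] (hG : IsMedianGraph G) (hD : D ∈ thetaClasses G)
    (hg : G.IsGate A x g) (hc : c ∈ A) (h : G.SameSide D x c) : G.SameSide D x g :=
  hG.sameSide_of_mem_interval hD (hg.2 c hc) h

lemma _root_.SimpleGraph.IsGate.sameSide_of_sameSide [Finite V] (hG : IsMedianGraph G)
    (hD : D ∈ thetaClasses G) (hg : G.IsGate A x g) (hg' : G.IsGate A y g')
    (h : G.SameSide D x y) : G.SameSide D g g' := by
  by_contra hgg'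
  have hyg : ¬ G.SameSide D y g := fun hyg => hgg' <| by
    have := hG.sameSide_of_mem_interval' hD (hg'.2 g hg.1) hyg
    rwa [hG.sameSide_comm hD] at this
  have hxg' : ¬ G.SameSide D x g' := fun hxg' =>
    hgg' (hG.sameSide_of_mem_interval' hD (hg.2 g' hg'.1) hxg')
  have := hG.sameSide_iff_iff hD g x g'
  have := hG.sameSide_iff_iff hD x y g
  have := hG.sameSide_comm hD (u := g) (v := x)
  tauto

lemma _root_.SimpleGraph.IsGate.not_sameSide [Finite V] (hG : IsMedianGraph G)
    (hD : D ∈ thetaClasses G) (hg : G.IsGate A x g) (hg' : G.IsGate A y g')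
    (hx : ∃ c ∈ A, G.SameSide D x c) (hy : ∃ c ∈ A, G.SameSide D y c)
    (h : ¬ G.SameSide D x y) : ¬ G.SameSide D g g' := by
  obtain ⟨c, hc, hxc⟩ := hx
  obtain ⟨c', hc', hyc'⟩ := hy
  have := hg.sameSide hG hD hc hxc
  have := hg'.sameSide hG hD hc' hyc'
  have := hG.sameSide_iff_iff hD x g y
  have := hG.sameSide_iff_iff hD g y g'
  have := hG.sameSide_comm hD (u := g') (v := y)
  tauto

lemma exists_mem_boundary_mem_interval [Finite V] (hG : IsMedianGraph G)
    (hp : G.SameSide C r p) (hq : ¬ G.SameSide C r q) :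
    ∃ v ∈ interval G p q, v ∈ G.boundary C r := by
  induction hn : G.dist q p using Nat.strong_induction_on generalizing q with
  | _ n ih =>
  obtain ⟨q', hqq', hq'p⟩ := hG.connected.exists_adj_dist_add_one
    (fun h : q = p => hq (h ▸ hp))
  have hq'I : q' ∈ interval G p q := by
    have := dist_eq_one_iff_adj.2 hqq'
    grind [mem_interval, SimpleGraph.dist_comm]
  by_cases hq' : G.SameSide C r q'
  · exact ⟨q', hq'I, hq', q, hqq'.symm, hq⟩
  · obtain ⟨v, hv, hvB⟩ := ih _ (by omega) hq' rfl
    exact ⟨v, interval_subset_interval hG.connected hq'I hv, hvB⟩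

lemma boundary_nonempty [Finite V] (hG : IsMedianGraph G) (hC : C ∈ thetaClasses G) (r : V) :
    (G.boundary C r).Nonempty := by
  obtain ⟨q, hq⟩ := hG.exists_not_sameSide hC r
  obtain ⟨v, -, hv⟩ := hG.exists_mem_boundary_mem_interval (hG.sameSide_refl hC r) hq
  exact ⟨v, hv⟩

lemma isConvex_boundary [Finite V] (hG : IsMedianGraph G) (hC : C ∈ thetaClasses G) (r : V) :
    G.IsConvex (G.boundary C r) := by
  rintro v ⟨hrv, w, hvw, hrw⟩ v' ⟨hrv', w', hvw', hrw'⟩ z hz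
  have hrz : G.SameSide C r z := by
    have hvv' := (hG.sameSide_iff_iff hC v r v').2
      (iff_of_true ((hG.sameSide_comm hC).1 hrv) hrv')
    exact (hG.sameSide_iff_iff hC r v z).2
      (iff_of_true hrv (hG.sameSide_of_mem_interval hC hz hvv'))
  obtain ⟨m, ⟨hww', hw'z, hzw⟩, -⟩ := hG.2 w w' z
  have hrm : ¬ G.SameSide C r m := fun hrm => hrw <| by
    have hww'C := (hG.sameSide_iff_iff hC w r w').2
      (iff_of_false (fun h => hrw ((hG.sameSide_comm hC).1 h)) hrw')
    have := hG.sameSide_of_mem_interval hC hww' hww'C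
    have := hG.sameSide_iff_iff hC r m w
    have := hG.sameSide_comm hC (u := w) (v := m)
    tauto
  -- every other class keeps `z, m` together, since it keeps `v, w` and `v', w'` together
  have hzm : ∀ D ∈ thetaClasses G, D ≠ C → G.SameSide D z m := by
    intro D hD hDC
    by_contra hDzm
    have hacross : ∀ {v w}, G.Adj v w → G.SameSide C r v → ¬ G.SameSide C r w →
        m ∈ interval G w z → ¬ G.SameSide D z v := by
      intro v w hvw hrv hrw hm hzv
      have hvw' : G.SameSide D v w := hG.sameSide_of_adj hD hvw fun h => hDC <| h.trans <|
        ((hG.not_sameSide_adj_iff hC hvw).1 fun h' => hrw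
          ((hG.sameSide_iff_iff hC r v w).2 (iff_of_true hrv h'))).symm
      have hzw := (hG.sameSide_iff_iff hD z v w).2 (iff_of_true hzv hvw')
      exact hDzm (hG.sameSide_of_mem_interval hD (mem_interval_comm.1 hm) hzw)
    have hzv := hacross hvw hrv hrw (mem_interval_comm.1 hzw)
    have hzv' := hacross hvw' hrv' hrw' hw'z
    have hvv' := (hG.sameSide_iff_iff hD v z v').2
      (iff_of_false (fun h => hzv ((hG.sameSide_comm hD).1 h)) hzv')
    exact hzv ((hG.sameSide_comm hD).1 (hG.sameSide_of_mem_interval hD hz hvv'))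
  exact ⟨hrz, m, hG.adj_of_forall_ne_sameSide hC (fun h => hrm ((hG.sameSide_iff_iff hC r z m).2
    (iff_of_true hrz h))) hzm, hrm⟩

lemma _root_.SimpleGraph.Crosses.exists_mem_boundary_sameSide [Finite V] (hG : IsMedianGraph G)
    (hC : C ∈ thetaClasses G) (hD : D ∈ thetaClasses G) (h : G.Crosses C D) (r e : V) :
    ∃ v ∈ G.boundary C r, G.SameSide D e v := by
  obtain ⟨r', hr'⟩ := hG.exists_not_sameSide hC r
  obtain ⟨p, hrp, hep⟩ := h r e
  obtain ⟨q, hr'q, heq⟩ := h r' e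
  have hrq : ¬ G.SameSide C r q := fun hrq => hr' ((hG.sameSide_iff_iff hC r q r').2
    (iff_of_true hrq ((hG.sameSide_comm hC).1 hr'q)))
  obtain ⟨v, hv, hvB⟩ := hG.exists_mem_boundary_mem_interval hrp hrq
  have hpq := (hG.sameSide_iff_iff hD p e q).2 (iff_of_true ((hG.sameSide_comm hD).1 hep) heq)
  exact ⟨v, hvB, (hG.sameSide_iff_iff hD e p v).2
    (iff_of_true hep (hG.sameSide_of_mem_interval hD hv hpq))⟩

end IsMedianGraph

/-! ### Cubes spanned by crossing classes -/

namespace SimpleGraph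

variable {V : Type*} {G : SimpleGraph V} {k : ℕ}

variable (G) in
/-- `φ` maps the `k`-cube to `G` so that coordinate `i` is cut exactly by the class `C i`
and no other class separates two image vertices. -/
def IsCubeMap (C : Fin k → Set (Sym2 V)) (φ : (Fin k → Bool) → V) : Prop :=
  ∀ D ∈ thetaClasses G, ∀ σ τ, G.SameSide D (φ σ) (φ τ) ↔ ∀ i, C i = D → σ i = τ i

end SimpleGraph

namespace IsMedianGraph

variable {V : Type*} {G : SimpleGraph V} {k : ℕ}

lemma exists_isCubeMap_succ [Finite V] (hG : IsMedianGraph G) {C : Fin (k + 1) → Set (Sym2 V)}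
    (hC : ∀ i, C i ∈ thetaClasses G)
    (hcross : ∀ i : Fin k, G.Crosses (C i.castSucc) (C (Fin.last k)))
    {ψ : (Fin k → Bool) → V} (hψ : G.IsCubeMap (fun i => C i.castSucc) ψ) :
    ∃ Φ, G.IsCubeMap C Φ := by
  set Ck := C (Fin.last k)
  have hCk : Ck ∈ thetaClasses G := hC _
  have hne : ∀ i : Fin k, C i.castSucc ≠ Ck := fun i => (hcross i).ne hG (hC _)
  set r := ψ fun _ => false
  choose P hP using fun σ => (hG.isConvex_boundary hCk r).exists_isGate hG
    (hG.boundary_nonempty hCk r) (ψ σ)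
  choose κ hκadj hκ using fun σ => (hP σ).1.2
  have hPside : ∀ D ∈ thetaClasses G, D ≠ Ck → ∀ σ τ,
      G.SameSide D (P σ) (P τ) ↔ G.SameSide D (ψ σ) (ψ τ) := by
    intro D hD hDk σ τ
    refine ⟨fun h => ?_, (hP σ).sameSide_of_sameSide hG hD (hP τ)⟩
    by_contra hψστ
    obtain ⟨i, rfl, -⟩ : ∃ i, C i.castSucc = D ∧ σ i ≠ τ i := by
      simpa using (hψ D hD σ τ).not.1 hψστ
    have hcr := (hcross i).symm
    exact (hP σ).not_sameSide hG hD (hP τ) (hcr.exists_mem_boundary_sameSide hG hCk hD r _)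
      (hcr.exists_mem_boundary_sameSide hG hCk hD r _) hψστ h
  have hΦP : ∀ D ∈ thetaClasses G, D ≠ Ck → ∀ σ b,
      G.SameSide D (cond b (κ σ) (P σ)) (P σ) := by
    rintro D hD hDk σ (_ | _)
    · exact hG.sameSide_refl hD _
    · show G.SameSide D (κ σ) (P σ)
      refine (hG.sameSide_comm hD).1 (hG.sameSide_of_adj hD (hκadj σ) fun h => hDk ?_)
      rw [h, ← (hG.not_sameSide_adj_iff hCk (hκadj σ)).1 fun h' => hκ σ
        ((hG.sameSide_iff_iff hCk r _ _).2 (iff_of_true (hP σ).1.1 h'))]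
  have hΦr : ∀ σ b, G.SameSide Ck r (cond b (κ σ) (P σ)) ↔ b = false := by
    rintro σ (_ | _)
    · exact iff_of_true (hP σ).1.1 rfl
    · exact iff_of_false (hκ σ) (by simp)
  refine ⟨fun σ => cond (σ (Fin.last k)) (κ (Fin.init σ)) (P (Fin.init σ)), fun D hD σ τ => ?_⟩
  simp only [Fin.forall_fin_succ']
  by_cases hDk : D = Ck
  · subst hDk
    rw [hG.sameSide_iff_iff hD _ r, hG.sameSide_comm hD (v := r), hΦr, hΦr]
    simp only [hne, false_imp_iff, implies_true, true_and, forall_const, Ck]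
    cases σ (Fin.last k) <;> cases τ (Fin.last k) <;> simp
  · rw [hG.sameSide_congr hD (hΦP D hD hDk _ _) (hΦP D hD hDk _ _), hPside D hD hDk, hψ D hD]
    simp [Ne.symm hDk, Ck, Fin.init]

theorem exists_isCubeMap [Finite V] (hG : IsMedianGraph G) :
    ∀ {k : ℕ} {C : Fin k → Set (Sym2 V)}, (∀ i, C i ∈ thetaClasses G) →
      Pairwise (fun i j => G.Crosses (C i) (C j)) → ∃ φ, G.IsCubeMap C φ
  | 0, _, _, _ => ⟨fun _ => hG.connected.nonempty.some,
      fun D hD _ _ => iff_of_true (hG.sameSide_refl hD _) fun i => i.elim0⟩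
  | _ + 1, C, hC, hcross => by
    obtain ⟨ψ, hψ⟩ := hG.exists_isCubeMap (C := fun i => C i.castSucc) (fun i => hC _)
      fun i j hij => hcross ((Fin.castSucc_injective _).ne hij)
    exact hG.exists_isCubeMap_succ hC (fun i => hcross (Fin.castSucc_lt_last i).ne) hψ

end IsMedianGraph

namespace SimpleGraph

variable {V : Type*} {G : SimpleGraph V} {k : ℕ} {C : Fin k → Set (Sym2 V)}
  {φ : (Fin k → Bool) → V}

open Finset in
lemma cubeGraph_adj_iff {σ τ : Fin k → Bool} :
    (cubeGraph k).Adj σ τ ↔ #{i | σ i ≠ τ i} = 1 := by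
  simp only [cubeGraph, fromRel_adj, card_eq_one, Finset.ext_iff, mem_filter, mem_univ, true_and,
    mem_singleton]
  constructor
  · rintro ⟨-, ⟨i, hi, hj⟩ | ⟨i, hi, hj⟩⟩
    · exact ⟨i, fun j => ⟨fun h => by_contra fun hji => h (hj j hji), fun h => h ▸ hi⟩⟩
    · exact ⟨i, fun j => ⟨fun h => by_contra fun hji => h (hj j hji).symm,
        fun h => h ▸ Ne.symm hi⟩⟩
  · rintro ⟨i, hi⟩
    exact ⟨fun h => (hi i).2 rfl (h ▸ rfl),
      Or.inl ⟨i, (hi i).2 rfl, fun j hj => not_not.1 fun h => hj ((hi j).1 h)⟩⟩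

open Finset in
lemma IsCubeMap.dist_eq [Finite V] (hG : IsMedianGraph G) (hφ : G.IsCubeMap C φ)
    (hC : ∀ i, C i ∈ thetaClasses G) (hinj : Function.Injective C) (σ τ : Fin k → Bool) :
    G.dist (φ σ) (φ τ) = #{i | σ i ≠ τ i} := by
  have hsep : G.sepClasses (φ σ) (φ τ) = C '' ↑({i | σ i ≠ τ i} : Finset (Fin k)) := by
    ext D
    simp only [sepClasses, Set.mem_ofPred_eq, coe_filter, mem_univ, true_and, Set.mem_image]
    constructor
    · rintro ⟨hD, hside⟩
      simpa [and_comm] using (hφ D hD σ τ).not.1 hside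
    · rintro ⟨i, hi, rfl⟩
      exact ⟨hC i, fun h => hi ((hφ _ (hC i) σ τ).1 h i rfl)⟩
  rw [← hG.ncard_sepClasses, hsep, Set.ncard_image_of_injective _ hinj, Set.ncard_coe_finset]

lemma IsCubeMap.nonempty_embedding [Finite V] (hG : IsMedianGraph G) (hφ : G.IsCubeMap C φ)
    (hC : ∀ i, C i ∈ thetaClasses G) (hinj : Function.Injective C) :
    Nonempty (cubeGraph k ↪g G) := by
  have hdist := hφ.dist_eq hG hC hinj
  refine ⟨⟨⟨φ, fun σ τ h => funext fun i => ?_⟩, fun {σ τ} => ?_⟩⟩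
  · have := hdist σ τ
    rw [h, dist_self, eq_comm, Finset.card_eq_zero, Finset.filter_eq_empty_iff] at this
    simpa using this (Finset.mem_univ i)
  · rw [cubeGraph_adj_iff, ← dist_eq_one_iff_adj]
    exact (hdist σ τ).symm ▸ Iff.rfl

end SimpleGraph

namespace IsMedianGraph

variable {V : Type*} {G : SimpleGraph V}

theorem nonempty_cubeGraph_embedding [Finite V] (hG : IsMedianGraph G) {k : ℕ}
    {C : Fin k → Set (Sym2 V)} (hC : ∀ i, C i ∈ thetaClasses G)
    (hcross : Pairwise (fun i j => G.Crosses (C i) (C j))) : Nonempty (cubeGraph k ↪g G) := by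
  obtain ⟨φ, hφ⟩ := hG.exists_isCubeMap hC hcross
  exact hφ.nonempty_embedding hG hC fun i j h => by_contra fun hij => (hcross hij).ne hG (hC i) h

end IsMedianGraph

/-! ### Down-classes and the proof of the bound -/

namespace SimpleGraph

variable {V : Type*} {G : SimpleGraph V}

variable (G) in
def downClasses (v₀ u : V) : Set (Set (Sym2 V)) :=
  {C | ∃ x, G.Adj u x ∧ G.dist v₀ x + 1 = G.dist v₀ u ∧ C = G.thetaClass s(u, x)}

lemma downClasses_subset_thetaClasses (v₀ u : V) : G.downClasses v₀ u ⊆ thetaClasses G := by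
  rintro _ ⟨x, hux, -, rfl⟩
  exact thetaClass_mem_thetaClasses hux

end SimpleGraph

namespace IsMedianGraph

variable {V : Type*} {G : SimpleGraph V} {C D : Set (Sym2 V)} {m u v v₀ x y : V}

lemma crosses_of_square (hG : IsMedianGraph G) (hux : G.Adj u x) (hxm : G.Adj x m)
    (hmy : G.Adj m y) (hyu : G.Adj y u) (hum : u ≠ m) (hxy : x ≠ y)
    (hne : G.thetaClass s(u, x) ≠ G.thetaClass s(u, y)) :
    G.Crosses (G.thetaClass s(u, x)) (G.thetaClass s(u, y)) := by
  have hC : G.thetaClass s(u, x) ∈ thetaClasses G := thetaClass_mem_thetaClasses hux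
  have hD : G.thetaClass s(u, y) ∈ thetaClasses G := thetaClass_mem_thetaClasses hyu.symm
  have hCym : ¬ G.SameSide (G.thetaClass s(u, x)) y m := hG.not_sameSide_of_mem hC <| by
    rw [← thetaClass_eq_of_oppEdges hux ⟨u, x, m, y, hux, hxm, hmy, hyu, hum, hxy, rfl, rfl⟩]
    exact mem_thetaClass_self hmy.symm
  have hDxm : ¬ G.SameSide (G.thetaClass s(u, y)) x m := hG.not_sameSide_of_mem hD <| by
    rw [← thetaClass_eq_of_oppEdges hyu.symm
      ⟨u, y, m, x, hyu.symm, hmy.symm, hxm.symm, hux.symm, hum, hxy.symm, rfl, rfl⟩]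
    exact mem_thetaClass_self hxm
  have hCux := hG.not_sameSide_of_mem hC (mem_thetaClass_self hux)
  have hDuy := hG.not_sameSide_of_mem hD (mem_thetaClass_self hyu.symm)
  have hCuy := hG.sameSide_of_adj hC hyu.symm hne
  have hDux := hG.sameSide_of_adj hD hux hne.symm
  set C := G.thetaClass s(u, x)
  set D := G.thetaClass s(u, y)
  have hCum : ¬ G.SameSide C u m := by rw [hG.sameSide_iff_iff hC u y m]; tauto
  have hDum : ¬ G.SameSide D u m := by rw [hG.sameSide_iff_iff hD u x m]; tauto
  have hCuu := hG.sameSide_refl hC u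
  have hDuu := hG.sameSide_refl hD u
  intro p q
  -- choose among the corners `u, x, y, m` the one in the requested quadrant
  obtain ⟨w, hCw, hDw⟩ : ∃ w, (G.SameSide C u w ↔ G.SameSide C p u) ∧
      (G.SameSide D u w ↔ G.SameSide D q u) := by
    by_cases h1 : G.SameSide C p u <;> by_cases h2 : G.SameSide D q u
    exacts [⟨u, iff_of_true hCuu h1, iff_of_true hDuu h2⟩,
      ⟨y, iff_of_true hCuy h1, iff_of_false hDuy h2⟩,
      ⟨x, iff_of_false hCux h1, iff_of_true hDux h2⟩,
      ⟨m, iff_of_false hCum h1, iff_of_false hDum h2⟩]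
  exact ⟨w, (hG.sameSide_iff_iff hC p u w).2 hCw.symm, (hG.sameSide_iff_iff hD q u w).2 hDw.symm⟩

lemma crosses_of_mem_downClasses (hG : IsMedianGraph G) (hC : C ∈ G.downClasses v₀ u)
    (hD : D ∈ G.downClasses v₀ u) (hne : C ≠ D) : G.Crosses C D := by
  obtain ⟨x, hux, hx, rfl⟩ := hC
  obtain ⟨y, huy, hy, rfl⟩ := hD
  have hxy : x ≠ y := by rintro rfl; exact hne rfl
  obtain ⟨m, hxm, hym, hm⟩ := hG.exists_adj_adj_dist_add_one hux huy hxy hx hy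
  exact hG.crosses_of_square hux hxm hym.symm huy.symm (by rintro rfl; omega) hxy hne

lemma sameSide_of_dist_add_one (hG : IsMedianGraph G) (hux : G.Adj u x)
    (hx : G.dist v₀ x + 1 = G.dist v₀ u) : G.SameSide (G.thetaClass s(u, x)) v₀ x := by
  rw [hG.sameSide_thetaClass_iff hux, dist_self, dist_eq_one_iff_adj.2 hux.symm]
  omega

lemma not_sameSide_of_dist_add_one (hG : IsMedianGraph G) (hux : G.Adj u x)
    (hx : G.dist v₀ x + 1 = G.dist v₀ u) : ¬ G.SameSide (G.thetaClass s(u, x)) v₀ u := by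
  have hC : G.thetaClass s(u, x) ∈ thetaClasses G := thetaClass_mem_thetaClasses hux
  rw [hG.sameSide_iff_iff hC v₀ x u, hG.sameSide_comm hC (u := x)]
  exact fun h => hG.not_sameSide_of_mem hC (mem_thetaClass_self hux)
    (h.1 (hG.sameSide_of_dist_add_one hux hx))

lemma mem_interval_of_downClasses_subset [Finite V] (hG : IsMedianGraph G)
    (h : G.downClasses v₀ u ⊆ G.downClasses v₀ v) : u ∈ interval G v₀ v := by
  obtain ⟨m, ⟨huv, hvv₀, hv₀u⟩, -⟩ := hG.2 u v v₀
  suffices m = u from mem_interval_comm.1 (this ▸ hvv₀)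
  by_contra hmu
  obtain ⟨x, hux, hxm⟩ := hG.connected.exists_adj_dist_add_one (Ne.symm hmu)
  have := hG.connected.dist_triangle (u := v₀) (v := m) (w := x)
  have := hG.connected.dist_triangle (u := v₀) (v := x) (w := u)
  have := dist_eq_one_iff_adj.2 hux
  rw [mem_interval] at hv₀u
  have hx : G.dist v₀ x + 1 = G.dist v₀ u := by grind [SimpleGraph.dist_comm]
  obtain ⟨y, hvy, hy, hCy⟩ := h ⟨x, hux, hx, rfl⟩
  -- the class of `ux` separates `v₀` from `u` and from `v`, yet puts `m` on the side of both
  -- `u` and `x`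
  have hC : G.thetaClass s(u, x) ∈ thetaClasses G := thetaClass_mem_thetaClasses hux
  have hCuv : G.SameSide (G.thetaClass s(u, x)) u v :=
    (hG.sameSide_iff_iff hC u v₀ v).2 <| iff_of_false
      (fun h' => hG.not_sameSide_of_dist_add_one hux hx ((hG.sameSide_comm hC).1 h'))
      (hCy ▸ hG.not_sameSide_of_dist_add_one hvy hy)
  have hxv₀ : m ∈ interval G x v₀ := by grind [mem_interval, SimpleGraph.dist_comm]
  have hCxm := hG.sameSide_of_mem_interval hC hxv₀
    ((hG.sameSide_comm hC).1 (hG.sameSide_of_dist_add_one hux hx))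
  exact hG.not_sameSide_of_mem hC (mem_thetaClass_self hux) <|
    (hG.sameSide_iff_iff hC u m x).2 (iff_of_true (hG.sameSide_of_mem_interval hC huv hCuv)
      ((hG.sameSide_comm hC).1 hCxm))

lemma downClasses_injective [Finite V] (hG : IsMedianGraph G) (v₀ : V) :
    Function.Injective (G.downClasses v₀) := fun u v h => by
  have hu := hG.mem_interval_of_downClasses_subset h.le
  have hv := hG.mem_interval_of_downClasses_subset h.ge
  rw [mem_interval] at hu hv
  exact hG.connected.dist_eq_zero_iff.1 (by grind [SimpleGraph.dist_comm])

end IsMedianGraph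

namespace SimpleGraph

variable {V : Type*}

variable (G : SimpleGraph V) in
def crossingGraph : SimpleGraph (thetaClasses G) where
  Adj C D := C ≠ D ∧ G.Crosses C D
  symm := ⟨fun _ _ h => ⟨h.1.symm, h.2.symm⟩⟩
  loopless := ⟨fun _ h => h.1 rfl⟩

end SimpleGraph

namespace IsMedianGraph

variable {V : Type*} {G : SimpleGraph V}

lemma card_le_of_isClique_crossingGraph [Finite V] (hG : IsMedianGraph G) {d : ℕ}
    (hmax : ∀ k : ℕ, Nonempty (cubeGraph k ↪g G) → k ≤ d) (t : Finset (thetaClasses G))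
    (ht : G.crossingGraph.IsClique (t : Set (thetaClasses G))) : t.card ≤ d := by
  let e := t.equivFin
  refine hmax _ (hG.nonempty_cubeGraph_embedding (C := fun i => (e.symm i).1.1)
    (fun i => (e.symm i).1.2) fun i j hij => (ht (e.symm i).2 (e.symm j).2 ?_).2)
  exact fun h => hij (e.symm.injective (Subtype.ext h))

lemma card_le_ncard_isClique_crossingGraph [Finite V] (hG : IsMedianGraph G) (v₀ : V) :
    Nat.card V ≤
      {t : Finset (thetaClasses G) | G.crossingGraph.IsClique (t : Set _)}.ncard := by
  let f : V → Finset (thetaClasses G) := fun u =>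
    (Set.toFinite {C : thetaClasses G | C.1 ∈ G.downClasses v₀ u}).toFinset
  have hf : ∀ u C, C ∈ f u ↔ C.1 ∈ G.downClasses v₀ u := fun u C => by simp [f]
  rw [← Set.ncard_univ]
  refine Set.ncard_le_ncard_of_injOn f (fun u _ C hC D hD hCD => ?_) (fun u _ v _ huv => ?_)
  · rw [Finset.mem_coe, hf] at hC hD
    exact ⟨hCD, hG.crosses_of_mem_downClasses hC hD (Subtype.coe_ne_coe.2 hCD)⟩
  · refine hG.downClasses_injective v₀ (Set.ext fun C => ?_)
    by_cases hC : C ∈ thetaClasses G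
    · simpa only [hf] using Finset.ext_iff.1 huv ⟨C, hC⟩
    · exact iff_of_false (fun h => hC (downClasses_subset_thetaClasses v₀ u h))
        (fun h => hC (downClasses_subset_thetaClasses v₀ v h))

end IsMedianGraph

lemma mul_rpow_inv_sub_one_le {n q : ℝ} {d : ℕ} (hd : 0 < d) (hn : 0 ≤ n) (hq : 0 ≤ q)
    (h : n ≤ (1 + q / d) ^ d) : d * (n ^ ((1 : ℝ) / d) - 1) ≤ q := by
  have hd' : (0 : ℝ) < d := Nat.cast_pos.2 hd
  have hroot : n ^ ((1 : ℝ) / d) ≤ 1 + q / d := by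
    calc n ^ ((1 : ℝ) / d) ≤ ((1 + q / d) ^ d) ^ ((1 : ℝ) / d) := by gcongr
      _ = 1 + q / d := by rw [one_div, Real.pow_rpow_inv_natCast (by positivity) hd.ne']
  calc d * (n ^ ((1 : ℝ) / d) - 1) ≤ d * (q / d) := by gcongr; linarith
    _ = q := by field_simp

theorem theta_classes_lower_bound_general {V : Type*} [Fintype V] (G : SimpleGraph V)
    (hG : IsMedianGraph G) (n q d : ℕ)
    (hn : Fintype.card V = n) (hq : (thetaClasses G).ncard = q)
    (hmax : ∀ k : ℕ, Nonempty (cubeGraph k ↪g G) → k ≤ d) :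
    (q : ℝ) ≥ d * ((n : ℝ) ^ ((1 : ℝ) / (d : ℝ)) - 1) := by
  rcases Nat.eq_zero_or_pos d with rfl | hd
  · simp
  have := Fintype.ofFinite (thetaClasses G)
  obtain ⟨v₀⟩ := hG.connected.nonempty
  refine mul_rpow_inv_sub_one_le hd n.cast_nonneg q.cast_nonneg ?_
  calc (n : ℝ) ≤ {t : Finset (thetaClasses G) | G.crossingGraph.IsClique (t : Set _)}.ncard := by
        rw [← hn, ← Nat.card_eq_fintype_card]
        exact_mod_cast hG.card_le_ncard_isClique_crossingGraph v₀
    _ ≤ (1 + Fintype.card (thetaClasses G) / d) ^ d :=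
        SimpleGraph.ncard_setOf_isClique_le (hG.card_le_of_isClique_crossingGraph hmax)
    _ = (1 + q / d) ^ d := by rw [← hq, ← Nat.card_eq_fintype_card, Nat.card_coe_set_eq]

theorem theta_classes_lower_bound {V : Type*} [Fintype V] (G : SimpleGraph V)
    (hG : IsMedianGraph G) (n q d : ℕ)
    (hn : Fintype.card V = n) (hq : (thetaClasses G).ncard = q)
    (hcube : Nonempty (cubeGraph d ↪g G))
    (hmax : ∀ k : ℕ, Nonempty (cubeGraph k ↪g G) → k ≤ d) :
    (q : ℝ) ≥ d * ((n : ℝ) ^ ((1 : ℝ) / (d : ℝ)) - 1) :=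
  theta_classes_lower_bound_general G hG n q d hn hq hmax
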